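/- arXiv:1510.00678 — 4 statements merged into one kernel-verified Lean document; each statement's English description precedes it below -/
import Mathlib

section
/- Let ℓ ∈ ℕ with ℓ ≥ 3, and let γ be a Cℓ planar curve parametrized by arc length, written in polar coordinates about M ∈ ℝ² as γ(s) = M + r(s)(cos θ(s), sin θ(s))ᵀ with r > 0 and θ'(0) > 0, with curvature κ. Suppose r(0) = R, r'(0) = 0, κ(0) = 1/R, κ⁽ᵏ⁾(0) = 0 for k = 1,…,ℓ−3, and κ^(ℓ−2)(0) ≠ 0. Then R − r(s) = (κ^(ℓ−2)(0)/ℓ!)·s^ℓ + o(s^ℓ) as s → 0; in particular there exist constants C > 0 and L₀ > 0 such that for all 0 < L ≤ L₀, sup_{|s| ≤ L} |R − ‖γ(s) − M‖| ≤ C·L^ℓ. -/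
open Set Real

/-- The Euclidean norm on `ℝ × ℝ`. -/
noncomputable def pnorm (v : ℝ × ℝ) : ℝ := Real.sqrt (v.1 ^ 2 + v.2 ^ 2)

/-- The open ray emanating from `M` in direction `(cos θ, sin θ)`. -/
def rayFrom (M : ℝ × ℝ) (θ : ℝ) : Set (ℝ × ℝ) :=
  {p | ∃ r : ℝ, 0 < r ∧ p = M + r • (Real.cos θ, Real.sin θ)}

/-- The `(M,R,d,θ₁,θ₂)`-ring segment. -/
def ringSeg (M : ℝ × ℝ) (R d θ₁ θ₂ : ℝ) : Set (ℝ × ℝ) :=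
  {p | ∃ r θ : ℝ, R - d ≤ r ∧ r ≤ R + d ∧ θ₁ ≤ θ ∧ θ ≤ θ₂ ∧
    p = M + r • (Real.cos θ, Real.sin θ)}

/-- The ring segment `R(M,R,d,θ₁,θ₂)` simply covers the set `G` (the graph of a curve):
every ray with angle `θ ∈ [θ₁,θ₂]` meets `G` in exactly one point, that point lies in the
ring segment, and every point of `G` lies on such a ray. -/
def SimplyCovers (M : ℝ × ℝ) (R d θ₁ θ₂ : ℝ) (G : Set (ℝ × ℝ)) : Prop :=
  (∀ θ ∈ Set.Icc θ₁ θ₂, ∃! p : ℝ × ℝ, p ∈ rayFrom M θ ∩ G) ∧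
  (∀ θ ∈ Set.Icc θ₁ θ₂, ∀ p ∈ rayFrom M θ ∩ G, p ∈ ringSeg M R d θ₁ θ₂) ∧
  (∀ p ∈ G, ∃ θ ∈ Set.Icc θ₁ θ₂, p ∈ rayFrom M θ)

/-- `G` is the graph of a convex curve: it is contained in the boundary of a nonempty
compact convex subset of `ℝ²`. -/
def IsConvexCurveGraph (G : Set (ℝ × ℝ)) : Prop :=
  ∃ K : Set (ℝ × ℝ), K.Nonempty ∧ IsCompact K ∧ Convex ℝ K ∧ G ⊆ frontier K

open Asymptotics Filter

/-!
The arc-length relation `r'² + r²θ'² = 1` and `κ = rθ'² - r''` give the radial equation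
`(r r')' = 1 - rκ`, i.e. `(r²)'' = 2 (1 - rκ)`. With `u = r - R` and `g = κ - 1/R` one has
`1 - rκ = -(u/R + R g + u g)`, and `u = O(r² - R²)` because `r > 0`. By Taylor,
`g = κ⁽ℓ⁻²⁾(0)/(ℓ-2)! · s^(ℓ-2) + o(s^(ℓ-2))`. Integrating `(r²)''` twice therefore improves
`u = o(s^k)` to `u = o(s^(k+2))` as long as `k < ℓ - 2`; one more double integration, now keeping
the leading term of `g`, expands `r² - R² = 2Ru + u²` to order `ℓ`, and `u² = o(s^ℓ)`.
-/

open scoped Topology Nat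

theorem isLittleO_sub_pow_succ {f f' : ℝ → ℝ} {s : Set ℝ} {d : ℝ} {n : ℕ} (hs : Convex ℝ s)
    (hs0 : s ∈ 𝓝 0) (hf : ∀ x ∈ s, HasDerivAt f (f' x) x)
    (hf' : (fun x => f' x - d / n ! * x ^ n) =o[𝓝 0] fun x => x ^ n) :
    (fun x => f x - f 0 - d / (n + 1)! * x ^ (n + 1)) =o[𝓝 0] fun x => x ^ (n + 1) := by
  have hpow (x : ℝ) : HasDerivAt (fun x => d / (n + 1)! * x ^ (n + 1)) (d / n ! * x ^ n) x := by
    refine ((hasDerivAt_pow (n + 1) x).const_mul (d / (n + 1)!)).congr_deriv ?_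
    rw [Nat.factorial_succ]
    push_cast
    field_simp
  have h := hs.isLittleO_pow_succ_real (mem_of_mem_nhds hs0)
    (fun x hx => ((hf x hx).sub (hpow x)).hasDerivWithinAt)
    (by simpa [nhdsWithin_eq_nhds.2 hs0] using hf')
  rw [nhdsWithin_eq_nhds.2 hs0] at h
  simpa [sub_right_comm _ (f 0)] using h

theorem isLittleO_sub_pow_add_two {f f' f'' : ℝ → ℝ} {s : Set ℝ} {d : ℝ} {n : ℕ}
    (hs : Convex ℝ s) (hs0 : s ∈ 𝓝 0) (hf : ∀ x ∈ s, HasDerivAt f (f' x) x)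
    (hf' : ∀ x ∈ s, HasDerivAt f' (f'' x) x) (hf'0 : f' 0 = 0)
    (hf'' : (fun x => f'' x - d / n ! * x ^ n) =o[𝓝 0] fun x => x ^ n) :
    (fun x => f x - f 0 - d / (n + 2)! * x ^ (n + 2)) =o[𝓝 0] fun x => x ^ (n + 2) := by
  have h := isLittleO_sub_pow_succ hs hs0 hf' hf''
  rw [hf'0] at h
  simp only [sub_zero] at h
  exact isLittleO_sub_pow_succ hs hs0 hf h

theorem isLittleO_sub_leading_term {f : ℝ → ℝ} {s : Set ℝ} {n : ℕ} (hs : Convex ℝ s)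
    (hso : IsOpen s) (h0 : 0 ∈ s) (hf : ContDiffOn ℝ (n + 1) f s)
    (hvanish : ∀ k, 1 ≤ k → k ≤ n → iteratedDeriv k f 0 = 0) :
    (fun x => f x - f 0 - iteratedDeriv (n + 1) f 0 / (n + 1)! * x ^ (n + 1))
      =o[𝓝 0] fun x => x ^ (n + 1) := by
  have h := taylor_isLittleO hs h0 (by exact_mod_cast hf)
  rw [hso.nhdsWithin_eq h0] at h
  simp only [sub_zero] at h
  refine h.congr_left fun x => ?_
  rw [taylor_within_apply, Finset.sum_range_succ, Finset.sum_eq_single 0]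
  · simp only [Nat.factorial_zero, Nat.cast_one, inv_one, sub_zero, pow_zero, mul_one,
      iteratedDerivWithin_of_isOpen hso h0, iteratedDeriv_zero, smul_eq_mul, one_mul]
    ring
  · intro k hk hk0
    rw [iteratedDerivWithin_of_isOpen hso h0, hvanish k (by omega) (by simpa using hk), smul_zero]
  · simp

theorem Asymptotics.IsBigO.exists_abs_le_mul_pow {f : ℝ → ℝ} {n : ℕ}
    (h : f =O[𝓝 0] fun x => x ^ n) :
    ∃ C > (0 : ℝ), ∃ L₀ > (0 : ℝ), ∀ L : ℝ, 0 < L → L ≤ L₀ →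
      ∀ s : ℝ, |s| ≤ L → |f s| ≤ C * L ^ n := by
  obtain ⟨C, hC, hCf⟩ := h.exists_pos
  obtain ⟨δ, hδ, hball⟩ := Metric.eventually_nhds_iff.1 hCf.bound
  refine ⟨C, hC, δ / 2, by positivity, fun L _ hL s hs => ?_⟩
  have hsδ : dist s 0 < δ := by rw [Real.dist_eq, sub_zero]; linarith
  calc |f s| ≤ C * |s| ^ n := by simpa [abs_pow] using hball hsδ
    _ ≤ C * L ^ n := by gcongr

theorem isBigO_sub_sq_sub {α : Type*} {l : Filter α} {r : α → ℝ} {R : ℝ} (hR : 0 < R)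
    (hr : ∀ᶠ x in l, 0 ≤ r x) : (fun x => r x - R) =O[l] fun x => r x ^ 2 - R ^ 2 := by
  refine IsBigO.of_bound R⁻¹ ?_
  filter_upwards [hr] with x hx
  rw [Real.norm_eq_abs, Real.norm_eq_abs, show r x ^ 2 - R ^ 2 = (r x - R) * (r x + R) by ring,
    abs_mul, abs_of_pos (by positivity : 0 < r x + R), le_inv_mul_iff₀ hR]
  nlinarith [abs_nonneg (r x - R)]

theorem isLittleO_one_sub_mul_add {α : Type*} {l : Filter α} {r κ h f : α → ℝ} {R c : ℝ}
    (hR : R ≠ 0) (hr : (fun x => r x - R) =o[l] f)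
    (hκ : (fun x => κ x - 1 / R - c * h x) =o[l] f)
    (hκ1 : (fun x => κ x - 1 / R) =O[l] fun _ => (1 : ℝ)) :
    (fun x => 1 - r x * κ x + R * c * h x) =o[l] f := by
  have h3 := (hr.mul_isBigO hκ1).congr_right fun x => mul_one (f x)
  refine (((hr.const_mul_left R⁻¹).add (hκ.const_mul_left R)).add h3).neg_left.congr_left
    fun x => ?_
  field_simp
  ring

theorem pnorm_smul_cos_sin {ρ : ℝ} (hρ : 0 ≤ ρ) (t : ℝ) : pnorm (ρ • (cos t, sin t)) = ρ := by
  rw [pnorm, Prod.smul_mk, smul_eq_mul, smul_eq_mul, mul_pow, mul_pow, ← mul_add,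
    cos_sq_add_sin_sq, mul_one, sqrt_sq hρ]

theorem hasDerivAt_mul_deriv_of_arcLength {r θ : ℝ → ℝ} {x : ℝ} (hr : DifferentiableAt ℝ r x)
    (hr' : DifferentiableAt ℝ (deriv r) x) (harc : deriv r x ^ 2 + (r x * deriv θ x) ^ 2 = 1) :
    HasDerivAt (fun t => r t * deriv r t)
      (1 - r x * (r x * deriv θ x ^ 2 - iteratedDeriv 2 r x)) x := by
  refine (hr.hasDerivAt.mul hr'.hasDerivAt).congr_deriv ?_
  rw [iteratedDeriv_succ, iteratedDeriv_one]
  linear_combination harc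

theorem ContDiffOn.polar_curvature {r θ : ℝ → ℝ} {s : Set ℝ} {n : ℕ} (hs : IsOpen s)
    (hr : ContDiffOn ℝ (n + 2) r s) (hθ : ContDiffOn ℝ (n + 2) θ s) :
    ContDiffOn ℝ n (fun x => r x * deriv θ x ^ 2 - iteratedDeriv 2 r x) s := by
  rw [iteratedDeriv_succ, iteratedDeriv_one]
  have hr'' := (hr.deriv_of_isOpen hs (m := n + 1) (by rw [add_assoc]; norm_num)).deriv_of_isOpen
    hs le_rfl
  have hθ' := hθ.deriv_of_isOpen hs (m := n) (by norm_cast; omega)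
  exact ((hr.of_le (by norm_cast; omega)).mul (hθ'.pow 2)).sub hr''

theorem isLittleO_radius_sub {r p κ : ℝ → ℝ} {s : Set ℝ} {R : ℝ} {n : ℕ} (hs : Convex ℝ s)
    (hs0 : s ∈ 𝓝 0) (hR : 0 < R) (hr0 : r 0 = R) (hrnonneg : ∀ᶠ x in 𝓝 0, 0 ≤ r x)
    (hr2 : ∀ x ∈ s, HasDerivAt (fun t => r t ^ 2) (p x) x)
    (hp : ∀ x ∈ s, HasDerivAt p (2 * (1 - r x * κ x)) x) (hp0 : p 0 = 0)
    (hκ : (fun x => κ x - 1 / R) =O[𝓝 0] fun x => x ^ n) :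
    (fun x => r x - R) =o[𝓝 0] fun x => x ^ n := by
  have hrR := isBigO_sub_sq_sub hR hrnonneg
  have hκ1 := hκ.trans (((continuous_pow n).tendsto 0).isBigO_one ℝ)
  suffices ∀ k ≤ n, (fun x => r x - R) =o[𝓝 0] fun x => x ^ k from this n le_rfl
  intro k
  induction k with
  | zero =>
    intro _
    refine hrR.trans_isLittleO ((isLittleO_one_iff ℝ).2 ?_)
    have h := (hr2 0 (mem_of_mem_nhds hs0)).continuousAt.tendsto.sub_const (R ^ 2)
    rwa [hr0, sub_self] at h
  | succ k ih =>
    intro hk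
    have hq : (fun x => 2 * (1 - r x * κ x) - 0 / k ! * x ^ k) =o[𝓝 0] fun x => x ^ k := by
      have := isLittleO_one_sub_mul_add hR.ne' (ih (by omega)) (c := 0) (h := fun x => x ^ n)
        (by simpa using hκ.trans_isLittleO (isLittleO_pow_pow (by omega))) hκ1
      simpa using this.const_mul_left 2
    have hsq := isLittleO_sub_pow_add_two hs hs0 hr2 hp hp0 hq
    simp only [zero_div, zero_mul, sub_zero, hr0] at hsq
    exact (hrR.trans_isLittleO hsq).trans_isBigO (isLittleO_pow_pow (by omega)).isBigO

theorem isLittleO_radius_sub_leading {r p κ : ℝ → ℝ} {s : Set ℝ} {R d : ℝ} {n : ℕ}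
    (hs : Convex ℝ s) (hs0 : s ∈ 𝓝 0) (hR : 0 < R) (hr0 : r 0 = R)
    (hrnonneg : ∀ᶠ x in 𝓝 0, 0 ≤ r x) (hr2 : ∀ x ∈ s, HasDerivAt (fun t => r t ^ 2) (p x) x)
    (hp : ∀ x ∈ s, HasDerivAt p (2 * (1 - r x * κ x)) x) (hp0 : p 0 = 0)
    (hκ : (fun x => κ x - 1 / R - d / n ! * x ^ n) =o[𝓝 0] fun x => x ^ n) :
    (fun x => R - r x - d / (n + 2)! * x ^ (n + 2)) =o[𝓝 0] fun x => x ^ (n + 2) := by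
  have hκO : (fun x => κ x - 1 / R) =O[𝓝 0] fun x => x ^ n :=
    (hκ.isBigO.add ((isBigO_refl _ _).const_mul_left (d / n !))).congr_left fun x => by ring
  have hκ1 := hκO.trans (((continuous_pow n).tendsto 0).isBigO_one ℝ)
  have hu := isLittleO_radius_sub hs hs0 hR hr0 hrnonneg hr2 hp hp0 hκO
  have hq : (fun x => 2 * (1 - r x * κ x) - -2 * R * d / n ! * x ^ n) =o[𝓝 0]
      fun x => x ^ n :=
    ((isLittleO_one_sub_mul_add hR.ne' hu hκ hκ1).const_mul_left 2).congr_left fun x => by ring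
  have hsq := isLittleO_sub_pow_add_two hs hs0 hr2 hp hp0 hq
  rw [hr0] at hsq
  have hsqO : (fun x => r x ^ 2 - R ^ 2) =O[𝓝 0] fun x => x ^ (n + 2) :=
    (hsq.isBigO.add ((isBigO_refl _ _).const_mul_left (-2 * R * d / (n + 2)!))).congr_left
      fun x => by ring
  have hu2 : (fun x => (r x - R) ^ 2) =o[𝓝 0] fun x => x ^ (n + 2) := by
    simpa [sq] using ((isBigO_sub_sq_sub hR hrnonneg).trans hsqO).mul_isLittleO
      (hu.trans_isBigO (((continuous_pow n).tendsto 0).isBigO_one ℝ))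
  refine ((hsq.const_mul_left (-(2 * R)⁻¹)).add (hu2.const_mul_left (2 * R)⁻¹)).congr_left
    fun x => ?_
  field_simp
  ring

theorem radial_deviation_asymptotics_general
    (ℓ : ℕ) (hℓ : 3 ≤ ℓ) (a b R : ℝ) (M : ℝ × ℝ)
    (γ : ℝ → ℝ × ℝ) (r θ κ : ℝ → ℝ)
    (ha : a < 0) (hb : 0 < b) (hR : 0 < R)
    (hr : ContDiffOn ℝ ℓ r (Set.Ioo a b))
    (hθ : ContDiffOn ℝ ℓ θ (Set.Ioo a b))
    (hpolar : ∀ s ∈ Set.Ioo a b, γ s = M + r s • (Real.cos (θ s), Real.sin (θ s)))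
    (hrpos : ∀ s ∈ Set.Ioo a b, 0 < r s)
    (harc : ∀ s ∈ Set.Ioo a b, (deriv r s) ^ 2 + (r s * deriv θ s) ^ 2 = 1)
    (hr0 : r 0 = R) (hr'0 : deriv r 0 = 0)
    (hκdef : κ = fun s => r s * (deriv θ s) ^ 2 - iteratedDeriv 2 r s)
    (hκ0 : κ 0 = 1 / R)
    (hκvanish : ∀ k : ℕ, 1 ≤ k → k ≤ ℓ - 3 → iteratedDeriv k κ 0 = 0) :
    (fun s : ℝ => R - r s - iteratedDeriv (ℓ - 2) κ 0 / (Nat.factorial ℓ) * s ^ ℓ)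
      =o[nhds 0] (fun s : ℝ => s ^ ℓ) ∧
    ∃ C > (0:ℝ), ∃ L₀ > (0:ℝ), ∀ L : ℝ, 0 < L → L ≤ L₀ →
      ∀ s : ℝ, |s| ≤ L → |R - pnorm (γ s - M)| ≤ C * L ^ ℓ := by
  obtain ⟨n, rfl⟩ : ∃ n, ℓ = n + 3 := ⟨ℓ - 3, by omega⟩
  have hU : Ioo a b ∈ 𝓝 0 := Ioo_mem_nhds ha hb
  have hr' : ContDiffOn ℝ (n + 2) (deriv r) (Ioo a b) := hr.deriv_of_isOpen isOpen_Ioo le_rfl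
  have hκC : ContDiffOn ℝ (n + 1) κ (Ioo a b) :=
    hκdef ▸ ContDiffOn.polar_curvature isOpen_Ioo (by exact_mod_cast hr) (by exact_mod_cast hθ)
  have hdiff {f : ℝ → ℝ} {k : ℕ} (hf : ContDiffOn ℝ (k + 1) f (Ioo a b)) (x : ℝ)
      (hx : x ∈ Ioo a b) : DifferentiableAt ℝ f x :=
    (hf.differentiableOn (by simp)).differentiableAt (isOpen_Ioo.mem_nhds hx)
  have hκ := isLittleO_sub_leading_term (convex_Ioo a b) isOpen_Ioo ⟨ha, hb⟩ hκC hκvanish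
  rw [hκ0] at hκ
  have hmain := isLittleO_radius_sub_leading (convex_Ioo a b) hU hR hr0
    (eventually_of_mem hU fun x hx => (hrpos x hx).le)
    (fun x hx => ((hdiff hr x hx).hasDerivAt.pow 2).congr_deriv (by ring))
    (fun x hx => (hasDerivAt_mul_deriv_of_arcLength (hdiff hr x hx) (hdiff hr' x hx)
      (harc x hx)).const_mul 2 |>.congr_deriv (by rw [hκdef]))
    (by simp [hr'0]) hκ
  have hO : (fun x => R - r x) =O[𝓝 0] fun x => x ^ (n + 3) :=
    (hmain.isBigO.add ((isBigO_refl _ _).const_mul_left _)).congr_left fun _ => sub_add_cancel _ _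
  refine ⟨hmain, (hO.congr' ?_ EventuallyEq.rfl).exists_abs_le_mul_pow⟩
  filter_upwards [hU] with x hx
  rw [hpolar x hx, add_sub_cancel_left, pnorm_smul_cos_sin (hrpos x hx).le]

/-- Under the osculation hypotheses of Statement 10 together with
`κ⁽ℓ⁻²⁾(0) ≠ 0`, one has `R − r(s) = (κ⁽ℓ⁻²⁾(0)/ℓ!)·sℓ + o(sℓ)` as `s → 0`; in
particular there are constants `C > 0` and `L₀ > 0` such that for all `0 < L ≤ L₀`,
`sup_{|s| ≤ L} |R − ‖γ(s) − M‖| ≤ C·Lℓ`. -/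
theorem radial_deviation_asymptotics
    (ℓ : ℕ) (hℓ : 3 ≤ ℓ) (a b R : ℝ) (M : ℝ × ℝ)
    (γ : ℝ → ℝ × ℝ) (r θ κ : ℝ → ℝ)
    (ha : a < 0) (hb : 0 < b) (hR : 0 < R)
    (hr : ContDiffOn ℝ ℓ r (Set.Ioo a b))
    (hθ : ContDiffOn ℝ ℓ θ (Set.Ioo a b))
    (hpolar : ∀ s ∈ Set.Ioo a b, γ s = M + r s • (Real.cos (θ s), Real.sin (θ s)))
    (hrpos : ∀ s ∈ Set.Ioo a b, 0 < r s)
    (harc : ∀ s ∈ Set.Ioo a b, (deriv r s) ^ 2 + (r s * deriv θ s) ^ 2 = 1)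
    (hθ'0 : 0 < deriv θ 0)
    (hr0 : r 0 = R) (hr'0 : deriv r 0 = 0)
    (hκdef : κ = fun s => r s * (deriv θ s) ^ 2 - iteratedDeriv 2 r s)
    (hκ0 : κ 0 = 1 / R)
    (hκvanish : ∀ k : ℕ, 1 ≤ k → k ≤ ℓ - 3 → iteratedDeriv k κ 0 = 0)
    (hκℓ : iteratedDeriv (ℓ - 2) κ 0 ≠ 0) :
    (fun s : ℝ => R - r s - iteratedDeriv (ℓ - 2) κ 0 / (Nat.factorial ℓ) * s ^ ℓ)
      =o[nhds 0] (fun s : ℝ => s ^ ℓ) ∧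
    ∃ C > (0:ℝ), ∃ L₀ > (0:ℝ), ∀ L : ℝ, 0 < L → L ≤ L₀ →
      ∀ s : ℝ, |s| ≤ L → |R - pnorm (γ s - M)| ≤ C * L ^ ℓ :=
  radial_deviation_asymptotics_general ℓ hℓ a b R M γ r θ κ ha hb hR hr hθ hpolar hrpos harc hr0
    hr'0 hκdef hκ0 hκvanish
end

section
/- Let γ be a C¹ convex planar curve parametrized by arc length which is simply covered by the ring segment R(M,R,d,θ₁,θ₂) with 0 < d < R, and let L_γ > 0 be its length. Then there exists θ₀ ∈ [θ₁,θ₂] such that the point x(θ₀) of gr γ, with normal angle φ₀ = φ(θ₀), satisfies sin|φ₀ − θ₀| ≤ 2dR/(L_γ(R−d)). -/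
open Set Real

/-! Along the curve, `f(s) = |γ(s) − M|²` stays in `[(R−d)², (R+d)²]`, so it varies by at most
`4Rd` over `[a, b]`, and the mean value theorem gives a parameter `s` with
`|f'(s)| ≤ 4Rd / L_γ`. Writing `γ(s) = M + r(cos θ₀, sin θ₀)`, we have
`f'(s) = 2 ⟨γ(s) − M, γ'(s)⟩ = 2r sin(φ(s) − θ₀)` and `r ≥ R − d`. -/

lemma pnorm_sq (v : ℝ × ℝ) : pnorm v ^ 2 = v.1 ^ 2 + v.2 ^ 2 :=
  Real.sq_sqrt (by positivity)

lemma continuous_pnorm : Continuous pnorm := by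
  unfold pnorm
  fun_prop

lemma pnorm_smul_cos_sin_s15 {r : ℝ} (hr : 0 ≤ r) (θ : ℝ) : pnorm (r • (cos θ, sin θ)) = r := by
  rw [pnorm, Prod.smul_fst, Prod.smul_snd, smul_eq_mul, smul_eq_mul, mul_pow, mul_pow,
    ← mul_add, cos_sq_add_sin_sq, mul_one, Real.sqrt_sq hr]

lemma pnorm_sub_mem_Icc_of_mem_ringSeg {M p : ℝ × ℝ} {R d θ₁ θ₂ : ℝ} (hdR : d ≤ R)
    (hp : p ∈ ringSeg M R d θ₁ θ₂) : pnorm (p - M) ∈ Icc (R - d) (R + d) := by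
  obtain ⟨r, θ, hr₁, hr₂, -, -, rfl⟩ := hp
  rw [add_sub_cancel_left, pnorm_smul_cos_sin_s15 (by linarith)]
  exact ⟨hr₁, hr₂⟩

lemma HasDerivAt.pnorm_sq {f : ℝ → ℝ × ℝ} {f' : ℝ × ℝ} {x : ℝ} (hf : HasDerivAt f f' x) :
    HasDerivAt (fun t => pnorm (f t) ^ 2) (2 * ((f x).1 * f'.1 + (f x).2 * f'.2)) x := by
  have hfst : HasDerivAt (fun t => (f t).1) f'.1 x := hf.fst
  have hsnd : HasDerivAt (fun t => (f t).2) f'.2 x := hf.snd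
  simp only [_root_.pnorm_sq]
  exact ((hfst.pow 2).add (hsnd.pow 2)).congr_deriv (by ring)

lemma hasDerivAt_pnorm_sub_sq_of_mem_rayFrom {γ : ℝ → ℝ × ℝ} {M : ℝ × ℝ} {θ φ s : ℝ}
    (hγ : HasDerivAt γ (sin φ, -cos φ) s) (hs : γ s ∈ rayFrom M θ) :
    HasDerivAt (fun t => pnorm (γ t - M) ^ 2) (2 * pnorm (γ s - M) * sin (φ - θ)) s := by
  obtain ⟨r, hr, hrs⟩ := hs
  convert (hγ.sub_const M).pnorm_sq using 1
  simp only [hrs, add_sub_cancel_left, pnorm_smul_cos_sin_s15 hr.le, Prod.smul_fst, Prod.smul_snd,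
    smul_eq_mul, sin_sub]
  ring

lemma exists_abs_deriv_mul_le_of_mapsTo_Icc {f f' : ℝ → ℝ} {a b m m' : ℝ} (hab : a < b)
    (hfc : ContinuousOn f (Icc a b)) (hf : ∀ x ∈ Ioo a b, HasDerivAt f (f' x) x)
    (hmaps : MapsTo f (Icc a b) (Icc m m')) :
    ∃ c ∈ Ioo a b, |f' c| * (b - a) ≤ m' - m := by
  obtain ⟨c, hc, hslope⟩ := exists_hasDerivAt_eq_slope f f' hab hfc hf
  refine ⟨c, hc, ?_⟩
  have hfa := hmaps (left_mem_Icc.2 hab.le)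
  have hfb := hmaps (right_mem_Icc.2 hab.le)
  rw [hslope, abs_div, abs_of_pos (sub_pos.2 hab), div_mul_cancel₀ _ (sub_pos.2 hab).ne']
  exact abs_sub_le_iff.2 ⟨by linarith [hfa.1, hfb.2], by linarith [hfa.2, hfb.1]⟩

lemma sin_abs_le_abs_sin (x : ℝ) : sin |x| ≤ |sin x| := by
  rcases abs_cases x with ⟨h, -⟩ | ⟨h, -⟩
  · rw [h]
    exact le_abs_self _
  · rw [h, sin_neg]
    exact neg_le_abs _

lemma sin_abs_le_of_abs_two_mul_sin_mul_le {x ρ L R d : ℝ} (hL : 0 < L) (hdR : d < R)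
    (hρ : R - d ≤ ρ) (h : |2 * ρ * sin x| * L ≤ (R + d) ^ 2 - (R - d) ^ 2) :
    sin |x| ≤ 2 * d * R / (L * (R - d)) := by
  rw [le_div_iff₀ (mul_pos hL (sub_pos.2 hdR))]
  calc sin |x| * (L * (R - d))
      ≤ |sin x| * (L * ρ) := by gcongr; exact sin_abs_le_abs_sin x
    _ = |2 * ρ * sin x| * L / 2 := by
        rw [abs_mul, abs_of_nonneg (by linarith : 0 ≤ 2 * ρ)]
        ring
    _ ≤ 2 * d * R := by linarith

theorem exists_point_with_small_normal_radial_angle_general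
    (a b R d θ₁ θ₂ : ℝ) (M : ℝ × ℝ) (γ : ℝ → ℝ × ℝ) (φ : ℝ → ℝ)
    (hab : a < b) (hdR : d < R)
    (hC1 : ContDiffOn ℝ 1 γ (Set.Icc a b))
    (htang : ∀ s ∈ Set.Icc a b, deriv γ s = (Real.sin (φ s), -Real.cos (φ s)))
    (hcover : SimplyCovers M R d θ₁ θ₂ (γ '' Set.Icc a b)) :
    ∃ θ₀ ∈ Set.Icc θ₁ θ₂, ∃ s ∈ Set.Icc a b, γ s ∈ rayFrom M θ₀ ∧
      Real.sin |φ s - θ₀| ≤ 2 * d * R / ((b - a) * (R - d)) := by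
  obtain ⟨-, hring, hray⟩ := hcover
  have hγ : ∀ s ∈ Ioo a b, HasDerivAt γ (sin (φ s), -cos (φ s)) s := fun s hs => by
    rw [← htang s (Ioo_subset_Icc_self hs)]
    exact ((hC1.differentiableOn one_ne_zero).differentiableAt (Icc_mem_nhds hs.1 hs.2)).hasDerivAt
  have hcovered : ∀ s ∈ Icc a b, ∃ θ ∈ Icc θ₁ θ₂, γ s ∈ rayFrom M θ ∧
      pnorm (γ s - M) ∈ Icc (R - d) (R + d) := fun s hs => by
    obtain ⟨θ, hθ, hθray⟩ := hray _ (mem_image_of_mem γ hs)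
    exact ⟨θ, hθ, hθray,
      pnorm_sub_mem_Icc_of_mem_ringSeg hdR.le (hring θ hθ _ ⟨hθray, mem_image_of_mem γ hs⟩)⟩
  choose! θ hθ hθray hρ using hcovered
  have hmaps : MapsTo (fun s => pnorm (γ s - M) ^ 2) (Icc a b) (Icc ((R - d) ^ 2) ((R + d) ^ 2)) :=
    fun s hs => ⟨pow_le_pow_left₀ (by linarith) (hρ s hs).1 2,
      pow_le_pow_left₀ (by linarith [(hρ s hs).1]) (hρ s hs).2 2⟩
  obtain ⟨s, hs, hs_bound⟩ := exists_abs_deriv_mul_le_of_mapsTo_Icc hab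
    ((continuous_pnorm.comp_continuousOn (hC1.continuousOn.sub continuousOn_const)).pow 2)
    (fun s hs =>
      hasDerivAt_pnorm_sub_sq_of_mem_rayFrom (hγ s hs) (hθray s (Ioo_subset_Icc_self hs)))
    hmaps
  have hs' := Ioo_subset_Icc_self hs
  exact ⟨θ s, hθ s hs', s, hs', hθray s hs',
    sin_abs_le_of_abs_two_mul_sin_mul_le (sub_pos.2 hab) hdR (hρ s hs').1 hs_bound⟩

/-- For a C¹ convex arc-length curve of length `L_γ = b − a > 0`,
simply covered by the ring segment `R(M,R,d,θ₁,θ₂)` with `0 < d < R`, there exists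
`θ₀ ∈ [θ₁,θ₂]` such that the covered point `x(θ₀) = γ(s)` with normal angle `φ₀ = φ(s)`
satisfies `sin |φ₀ − θ₀| ≤ 2dR/(L_γ(R−d))`. -/
theorem exists_point_with_small_normal_radial_angle
    (a b R d θ₁ θ₂ : ℝ) (M : ℝ × ℝ) (γ : ℝ → ℝ × ℝ) (φ : ℝ → ℝ)
    (hab : a < b) (hd : 0 < d) (hdR : d < R) (hθ : θ₁ < θ₂)
    (hC1 : ContDiffOn ℝ 1 γ (Set.Icc a b))
    (htang : ∀ s ∈ Set.Icc a b, deriv γ s = (Real.sin (φ s), -Real.cos (φ s)))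
    (hconv : IsConvexCurveGraph (γ '' Set.Icc a b))
    (hcover : SimplyCovers M R d θ₁ θ₂ (γ '' Set.Icc a b)) :
    ∃ θ₀ ∈ Set.Icc θ₁ θ₂, ∃ s ∈ Set.Icc a b, γ s ∈ rayFrom M θ₀ ∧
      Real.sin |φ s - θ₀| ≤ 2 * d * R / ((b - a) * (R - d)) :=
  exists_point_with_small_normal_radial_angle_general a b R d θ₁ θ₂ M γ φ hab hdR hC1 htang hcover
end

section
/- Let ℓ ∈ ℕ with ℓ ≥ 3. Let γ be a real-analytic convex planar curve parametrized by arc length with curvature 0 < κ_min ≤ κ(s) ≤ κ_max, written in polar coordinates about M ∈ ℝ² as γ(s) = M + r(s)(cos θ(s), sin θ(s))ᵀ, with r(0) = R, r'(0) = 0, κ(0) = 1/R, κ⁽ᵏ⁾(0) = 0 for k = 1,…,ℓ−3 and κ^(ℓ−2)(0) ≠ 0, and suppose the support function f of γ with center M is real-analytic on the range of normal angles. Then there exist constants C > 0 and L₀ > 0 such that: whenever the ring segment R(M,R,d,θ₁,θ₂) tightly simply covers γ (i.e. it simply covers γ and d = sup_s |R − ‖γ(s) − M‖|), γ(0) ∈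 gr γ, and the covered arc length satisfies L_γ ≤ L₀, then d ≤ C·L_γ³. -/
open Set Real

/-- Under the hypotheses of Statement 13, there exist `C > 0`, `L₀ > 0`
such that whenever a ring segment `R(M,R,d,θ₁,θ₂)` *tightly* simply covers the subarc
`γ([a,b])` containing `γ(0)` (i.e. it simply covers it and
`d = sup_s |R − ‖γ(s) − M‖|`), and the arc length satisfies `L_γ = b − a ≤ L₀`, then
`d ≤ C·L_γ³`. -/
theorem tight_thickness_cubic_bound
    (ℓ : ℕ) (hℓ : 3 ≤ ℓ) (A B R κmin κmax : ℝ) (M : ℝ × ℝ)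
    (γ : ℝ → ℝ × ℝ) (r θ φ f κ : ℝ → ℝ)
    (hA : A < 0) (hB : 0 < B) (hR : 0 < R)
    (hγan : AnalyticOnNhd ℝ γ (Set.Icc A B))
    (hran : AnalyticOnNhd ℝ r (Set.Icc A B))
    (hθan : AnalyticOnNhd ℝ θ (Set.Icc A B))
    (hpolar : ∀ s ∈ Set.Icc A B, γ s = M + r s • (Real.cos (θ s), Real.sin (θ s)))
    (hrpos : ∀ s ∈ Set.Icc A B, 0 < r s)
    (htang : ∀ s ∈ Set.Icc A B, deriv γ s = (Real.sin (φ s), -Real.cos (φ s)))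
    (hconv : IsConvexCurveGraph (γ '' Set.Icc A B))
    (hκdef : κ = fun s => r s * (deriv θ s) ^ 2 - iteratedDeriv 2 r s)
    (hκmin : 0 < κmin)
    (hκbounds : ∀ s ∈ Set.Icc A B, κmin ≤ κ s ∧ κ s ≤ κmax)
    (hr0 : r 0 = R) (hr'0 : deriv r 0 = 0) (hκ0 : κ 0 = 1 / R)
    (hκvanish : ∀ k : ℕ, 1 ≤ k → k ≤ ℓ - 3 → iteratedDeriv k κ 0 = 0)
    (hκℓ : iteratedDeriv (ℓ - 2) κ 0 ≠ 0)
    (hf : ∀ ψ ∈ φ '' Set.Icc A B, IsGreatest {x : ℝ | ∃ t ∈ Set.Icc A B,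
      x = (γ t - M).1 * Real.cos ψ + (γ t - M).2 * Real.sin ψ} (f ψ))
    (hfan : AnalyticOnNhd ℝ f (φ '' Set.Icc A B)) :
    ∃ C > (0:ℝ), ∃ L₀ > (0:ℝ), ∀ a b d θ₁ θ₂ : ℝ,
      A ≤ a → a ≤ 0 → 0 ≤ b → b ≤ B → a < b → 0 < d → d < R → θ₁ < θ₂ →
      SimplyCovers M R d θ₁ θ₂ (γ '' Set.Icc a b) →
      d = sSup ((fun s => |R - pnorm (γ s - M)|) '' Set.Icc a b) →
      b - a ≤ L₀ →
      d ≤ C * (b - a) ^ 3 := by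
  have h0AB : (0:ℝ) ∈ Set.Icc A B := ⟨hA.le, hB.le⟩
  have it2 : iteratedDeriv 2 r = deriv (deriv r) := by
    simp [iteratedDeriv_eq_iterate, Function.iterate_succ']
  have hr1an : AnalyticOnNhd ℝ (deriv r) (Set.Icc A B) := hran.deriv
  have hr2an : AnalyticOnNhd ℝ (deriv (deriv r)) (Set.Icc A B) := hr1an.deriv
  have hr3an : AnalyticOnNhd ℝ (deriv (deriv (deriv r))) (Set.Icc A B) := hr2an.deriv
  obtain ⟨C₃, hC₃⟩ := isCompact_Icc.exists_bound_of_continuousOn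
    (fun x hx => ((hr3an x hx).continuousAt).continuousWithinAt)
  have hC₃0 : 0 ≤ C₃ := le_trans (norm_nonneg _) (hC₃ 0 h0AB)
  -- derivative of θ at 0
  have hθd : HasDerivAt θ (deriv θ 0) 0 := ((hθan 0 h0AB).differentiableAt).hasDerivAt
  have hrd : HasDerivAt r 0 0 := by
    have := ((hran 0 h0AB).differentiableAt).hasDerivAt; rwa [hr'0] at this
  set θ'0 := deriv θ 0 with hθ'0
  have hg : HasDerivAt (fun s => (M.1 + r s * Real.cos (θ s), M.2 + r s * Real.sin (θ s)))
      ((0 * Real.cos (θ 0) + r 0 * (-Real.sin (θ 0) * θ'0),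
        0 * Real.sin (θ 0) + r 0 * (Real.cos (θ 0) * θ'0))) 0 :=
    HasDerivAt.prodMk (HasDerivAt.const_add _ (hrd.mul hθd.cos))
      (HasDerivAt.const_add _ (hrd.mul hθd.sin))
  have hEq : γ =ᶠ[nhds (0:ℝ)]
      fun s => (M.1 + r s * Real.cos (θ s), M.2 + r s * Real.sin (θ s)) := by
    filter_upwards [Icc_mem_nhds hA hB] with s hs
    rw [hpolar s hs]
    simp [Prod.ext_iff, Prod.smul_def, smul_eq_mul]
  have hder : (Real.sin (φ 0), -Real.cos (φ 0)) =
      ((0 * Real.cos (θ 0) + r 0 * (-Real.sin (θ 0) * θ'0),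
        0 * Real.sin (θ 0) + r 0 * (Real.cos (θ 0) * θ'0))) := by
    rw [← htang 0 h0AB, hEq.deriv_eq, hg.deriv]
  have h1 : Real.sin (φ 0) = R * (-Real.sin (θ 0) * θ'0) := by
    have := congrArg Prod.fst hder; simpa [hr0] using this
  have h2 : -Real.cos (φ 0) = R * (Real.cos (θ 0) * θ'0) := by
    have := congrArg Prod.snd hder; simpa [hr0] using this
  have hunit : R ^ 2 * θ'0 ^ 2 = 1 := by
    have hs1 : Real.sin (φ 0) ^ 2 + Real.cos (φ 0) ^ 2 = 1 := Real.sin_sq_add_cos_sq _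
    have hs2 : Real.sin (θ 0) ^ 2 + Real.cos (θ 0) ^ 2 = 1 := Real.sin_sq_add_cos_sq _
    have e1 : Real.sin (φ 0) ^ 2 = R ^ 2 * Real.sin (θ 0) ^ 2 * θ'0 ^ 2 := by
      rw [h1]; ring
    have h2' : Real.cos (φ 0) = -(R * (Real.cos (θ 0) * θ'0)) := by linarith
    have e2 : Real.cos (φ 0) ^ 2 = R ^ 2 * Real.cos (θ 0) ^ 2 * θ'0 ^ 2 := by
      rw [h2']; ring
    linear_combination hs1 - (R ^ 2 * θ'0 ^ 2) * hs2 - e1 - e2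
  have hr2_0 : deriv (deriv r) 0 = 0 := by
    have hk : κ 0 = r 0 * θ'0 ^ 2 - iteratedDeriv 2 r 0 := by rw [hκdef]
    rw [hκ0, hr0, it2] at hk
    have hRθ : R * θ'0 ^ 2 = 1 / R := by
      field_simp; nlinarith [hunit]
    linarith [hk, hRθ]
  refine ⟨C₃ + 1, by linarith, 1, one_pos, ?_⟩
  intro a b d θ₁ θ₂ hAa ha0 h0b hbB hab hd0 hdR hθθ hcov hd hL
  have hsub : Set.Icc a b ⊆ Set.Icc A B := Set.Icc_subset_Icc hAa hbB
  have h0ab : (0:ℝ) ∈ Set.Icc a b := ⟨ha0, h0b⟩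
  set L := b - a with hLdef
  have hLpos : 0 < L := by simp [hLdef]; linarith
  have habs : ∀ t ∈ Set.Icc a b, |t| ≤ L := by
    intro t ht
    rw [abs_le]; constructor <;> [linarith [ht.2, ht.1]; linarith [ht.1, ht.2]]
  -- Step 1: |r'' t| ≤ C₃ * L on [a,b]
  have step2 : ∀ t ∈ Set.Icc a b, |deriv (deriv r) t| ≤ C₃ * L := by
    intro t ht
    have h := Convex.norm_image_sub_le_of_norm_deriv_le
      (f := deriv (deriv r)) (fun x hx => (hr2an x (hsub hx)).differentiableAt)
      (fun x hx => hC₃ x (hsub hx)) (convex_Icc a b) h0ab ht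
    rw [hr2_0, sub_zero, sub_zero] at h
    calc |deriv (deriv r) t| ≤ C₃ * |t| := by simpa using h
      _ ≤ C₃ * L := by nlinarith [habs t ht]
  -- Step 2: |r' t| ≤ C₃ * L * L on [a,b]
  have step1 : ∀ t ∈ Set.Icc a b, |deriv r t| ≤ C₃ * L * L := by
    intro t ht
    have h := Convex.norm_image_sub_le_of_norm_deriv_le
      (f := deriv r) (fun x hx => (hr1an x (hsub hx)).differentiableAt)
      (fun x hx => step2 x hx) (convex_Icc a b) h0ab ht
    rw [hr'0, sub_zero, sub_zero] at h
    calc |deriv r t| ≤ C₃ * L * |t| := by simpa using h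
      _ ≤ C₃ * L * L :=
        mul_le_mul_of_nonneg_left (habs t ht) (mul_nonneg hC₃0 hLpos.le)
  -- Step 3: |r t - R| ≤ C₃ * L^3
  have step0 : ∀ t ∈ Set.Icc a b, |r t - R| ≤ C₃ * L ^ 3 := by
    intro t ht
    have h := Convex.norm_image_sub_le_of_norm_deriv_le
      (f := r) (fun x hx => (hran x (hsub hx)).differentiableAt)
      (fun x hx => step1 x hx) (convex_Icc a b) h0ab ht
    rw [hr0, sub_zero] at h
    calc |r t - R| ≤ C₃ * L * L * |t| := by simpa using h
      _ ≤ C₃ * L * L * L :=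
        mul_le_mul_of_nonneg_left (habs t ht)
          (mul_nonneg (mul_nonneg hC₃0 hLpos.le) hLpos.le)
      _ = C₃ * L ^ 3 := by ring
  rw [hd]
  apply Real.sSup_le
  · rintro x ⟨s, hs, rfl⟩
    have hsAB := hsub hs
    have hγs : γ s - M = r s • (Real.cos (θ s), Real.sin (θ s)) := by
      rw [hpolar s hsAB, add_sub_cancel_left]
    have hp : pnorm (γ s - M) = r s := by
      rw [hγs]
      simp only [pnorm, Prod.smul_mk, smul_eq_mul]
      have hx : (r s * Real.cos (θ s)) ^ 2 + (r s * Real.sin (θ s)) ^ 2 = (r s) ^ 2 := by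
        linear_combination (r s) ^ 2 * Real.sin_sq_add_cos_sq (θ s)
      rw [hx, Real.sqrt_sq (hrpos s hsAB).le]
    dsimp only
    rw [hp, abs_sub_comm]
    calc |r s - R| ≤ C₃ * L ^ 3 := step0 s hs
      _ ≤ (C₃ + 1) * L ^ 3 := by nlinarith [pow_pos hLpos 3]
  · positivity
end

section
/- Let γ : [a,b] → ℝ² be a C² planar curve parametrized by arc length whose curvature κ is continuous, and let s₀ ∈ (a,b) with κ(s₀) > 0. Then there exists δ > 0 such that the restriction of γ to [s₀−δ, s₀+δ] is a convex curve with strictly positive curvature, i.e. its graph is contained in the boundary of a nonempty compact convex subset of ℝ² and κ(s) > 0 for all s ∈ [s₀−δ, s₀+δ]. -/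
/-!
Since `‖γ'‖ = 1`, `γ''` is orthogonal to `γ'`, so `γ'' = κ N`. Near `s₀` the curvature is
positive and bounded by some `M`, on an interval of length at most `1 / M`. Fix `s` in it. The
cosine `⟨γ'(s), γ'(r)⟩` of the turning angle is `1` at `r = s` and changes at rate at most `M`,
so it stays nonnegative; it equals `⟨N(s), N(r)⟩`, hence `⟨N(s), γ'(r)⟩` has derivative
`κ(r) ⟨N(s), N(r)⟩ ≥ 0` and vanishes at `r = s`. So `r ↦ ⟨N(s), γ(r)⟩` is minimal at `r = s`:
the arc has a supporting line at each of its points, which therefore lie on the boundary of the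
closed convex hull of the arc. Only inner products of frame vectors are differentiated, never
the angle `φ`, which need not even be continuous.
-/

open Set Real

open Filter Topology

noncomputable def dotL (v : ℝ × ℝ) : ℝ × ℝ →L[ℝ] ℝ :=
  v.1 • ContinuousLinearMap.fst ℝ ℝ ℝ + v.2 • ContinuousLinearMap.snd ℝ ℝ ℝ

@[simp]
theorem dotL_apply (v p : ℝ × ℝ) : dotL v p = v.1 * p.1 + v.2 * p.2 := rfl

theorem mem_frontier_of_isMinOn {E : Type*} [NormedAddCommGroup E] [NormedSpace ℝ E]
    {K : Set E} {p : E} {ℓ : E →L[ℝ] ℝ} (hℓ : ℓ ≠ 0) (hp : p ∈ closure K)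
    (hmin : IsMinOn ℓ K p) : p ∈ frontier K :=
  ⟨hp, fun hint => hℓ ((hmin.isLocalMin (mem_interior_iff_mem_nhds.1 hint)).hasFDerivAt_eq_zero
    ℓ.hasFDerivAt)⟩

theorem isConvexCurveGraph_of_forall_isMinOn {G : Set (ℝ × ℝ)} (hne : G.Nonempty)
    (hG : IsCompact G) (hmin : ∀ p ∈ G, ∃ ℓ : ℝ × ℝ →L[ℝ] ℝ, ℓ ≠ 0 ∧ IsMinOn ℓ G p) :
    IsConvexCurveGraph G := by
  have hGK : G ⊆ closure (convexHull ℝ G) := (subset_convexHull ℝ G).trans subset_closure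
  refine ⟨closure (convexHull ℝ G), hne.mono hGK,
    (isBounded_convexHull.2 hG.isBounded).isCompact_closure, (convex_convexHull ℝ G).closure,
    fun p hp => ?_⟩
  obtain ⟨ℓ, hℓ, hpmin⟩ := hmin p hp
  have hK : closure (convexHull ℝ G) ⊆ ℓ ⁻¹' Ici (ℓ p) :=
    closure_minimal
      (convexHull_min hpmin ((convex_Ici _).linear_preimage (ℓ : ℝ × ℝ →ₗ[ℝ] ℝ)))
      (isClosed_Ici.preimage ℓ.continuous)
  exact mem_frontier_of_isMinOn hℓ (subset_closure (hGK hp)) hK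

theorem isMinOn_of_hasDerivAt_of_monotoneOn {f f' : ℝ → ℝ} {c d s : ℝ}
    (hf : ∀ x ∈ Icc c d, HasDerivAt f (f' x) x) (hf' : MonotoneOn f' (Icc c d))
    (hs : s ∈ Icc c d) (hs₀ : f' s = 0) : IsMinOn f (Icc c d) s := by
  have hsub : ∀ {x y : ℝ}, x ∈ Icc c d → y ∈ Icc c d → Ioo x y ⊆ Icc c d := fun hx hy =>
    Ioo_subset_Icc_self.trans (Icc_subset_Icc hx.1 hy.2)
  have hcont : ∀ x ∈ Icc c d, ContinuousAt f x := fun x hx => (hf x hx).continuousAt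
  have hdiff : ∀ {x y : ℝ}, x ∈ Icc c d → y ∈ Icc c d → DifferentiableOn ℝ f (Ioo x y) :=
    fun hx hy z hz => (hf z (hsub hx hy hz)).differentiableAt.differentiableWithinAt
  have hleft : c ∈ Icc c d := ⟨le_rfl, hs.1.trans hs.2⟩
  have hright : d ∈ Icc c d := ⟨hs.1.trans hs.2, le_rfl⟩
  refine isMinOn_Icc_of_deriv (hcont c hleft) (hcont s hs) (hcont d hright)
    (hdiff hleft hs) (hdiff hs hright) (fun x hx => ?_) (fun x hx => ?_)
  · rw [(hf x (hsub hleft hs hx)).deriv, ← hs₀]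
    exact hf' (hsub hleft hs hx) hs hx.2.le
  · rw [(hf x (hsub hs hright hx)).deriv, ← hs₀]
    exact hf' hs (hsub hs hright hx) hx.1.le

theorem exists_Icc_subset_forall_mem_Ioo {f : ℝ → ℝ} {U : Set ℝ} {x M : ℝ} (hU : U ∈ 𝓝 x)
    (hf : ContinuousAt f x) (hx : 0 < f x) (hM : f x < M) :
    ∃ δ > 0, Icc (x - δ) (x + δ) ⊆ U ∧ 2 * δ * M ≤ 1 ∧
      ∀ t ∈ Icc (x - δ) (x + δ), f t ∈ Ioo 0 M := by
  obtain ⟨ε, hε, hball⟩ := Metric.eventually_nhds_iff_ball.1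
    (Filter.inter_mem hU (hf.preimage_mem_nhds (Ioo_mem_nhds hx hM)))
  have hM₀ : 0 < M := hx.trans hM
  set δ := min (ε / 2) (1 / (2 * M))
  have hδ : 0 < δ := lt_min (half_pos hε) (by positivity)
  have hball' : Icc (x - δ) (x + δ) ⊆ Metric.ball x ε := by
    rw [← Real.closedBall_eq_Icc]
    exact Metric.closedBall_subset_ball ((min_le_left _ _).trans_lt (half_lt_self hε))
  refine ⟨δ, hδ, fun t ht => (hball t (hball' ht)).1, ?_, fun t ht => (hball t (hball' ht)).2⟩
  calc 2 * δ * M ≤ 2 * (1 / (2 * M)) * M := by gcongr; exact min_le_right _ _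
    _ = 1 := by field_simp

theorem eq_curvature_smul_normal {u : ℝ → ℝ × ℝ} {v : ℝ × ℝ} {φ : ℝ → ℝ} {t : ℝ}
    (hu : HasDerivAt u v t) (hφ : ∀ᶠ r in 𝓝 t, u r = (sin (φ r), -cos (φ r))) :
    v = (cos (φ t) * v.1 + sin (φ t) * v.2) • (cos (φ t), sin (φ t)) := by
  have h₁ := (ContinuousLinearMap.fst ℝ ℝ ℝ).hasFDerivAt.comp_hasDerivAt t hu
  have h₂ := (ContinuousLinearMap.snd ℝ ℝ ℝ).hasFDerivAt.comp_hasDerivAt t hu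
  have hunit : (fun r => (u r).1 ^ 2 + (u r).2 ^ 2) =ᶠ[𝓝 t] fun _ => 1 := by
    filter_upwards [hφ] with r hr
    simp [hr, sin_sq_add_cos_sq]
  have horth := ((h₁.pow 2).add (h₂.pow 2)).unique
    (hunit.hasDerivAt_iff.2 (hasDerivAt_const t 1))
  simp only [hφ.self_of_nhds, Function.comp_apply, ContinuousLinearMap.coe_fst',
    ContinuousLinearMap.coe_snd'] at horth
  have hpyth := sin_sq_add_cos_sq (φ t)
  ext <;> simp only [Prod.smul_fst, Prod.smul_snd, smul_eq_mul]
  · linear_combination sin (φ t) / 2 * horth - v.1 * hpyth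
  · linear_combination -cos (φ t) / 2 * horth - v.2 * hpyth

theorem isMinOn_normal_of_curvature_le {c d M : ℝ} {γ γ' γ'' : ℝ → ℝ × ℝ} {φ κ : ℝ → ℝ}
    {s : ℝ} (hγ' : ∀ r ∈ Icc c d, HasDerivAt γ (γ' r) r)
    (hγ'' : ∀ r ∈ Icc c d, HasDerivAt γ' (γ'' r) r)
    (htang : ∀ r ∈ Icc c d, γ' r = (sin (φ r), -cos (φ r)))
    (hframe : ∀ r ∈ Icc c d, γ'' r = κ r • (cos (φ r), sin (φ r)))
    (hκ : ∀ r ∈ Icc c d, 0 ≤ κ r ∧ κ r ≤ M) (hM : (d - c) * M ≤ 1) (hs : s ∈ Icc c d) :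
    IsMinOn (dotL (cos (φ s), sin (φ s))) (γ '' Icc c d) (γ s) := by
  set N : ℝ × ℝ := (cos (φ s), sin (φ s))
  have hdot : ∀ (w : ℝ × ℝ) {F F' : ℝ → ℝ × ℝ}, (∀ r ∈ Icc c d, HasDerivAt F (F' r) r) →
      ∀ r ∈ Icc c d, HasDerivAt (fun r => dotL w (F r)) (dotL w (F' r)) r :=
    fun w _ _ hF r hr => (dotL w).hasFDerivAt.comp_hasDerivAt r (hF r hr)
  have hcos : ∀ r ∈ Icc c d, 0 ≤ cos (φ r - φ s) := by
    intro r hr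
    have hbound : ∀ x ∈ Icc c d, ‖dotL (γ' s) (γ'' x)‖ ≤ M := by
      intro x hx
      have hval : dotL (γ' s) (γ'' x) = κ x * sin (φ s - φ x) := by
        simp only [htang s hs, hframe x hx, dotL_apply, Prod.smul_fst, Prod.smul_snd,
          smul_eq_mul, sin_sub]
        ring
      rw [hval, norm_mul, Real.norm_of_nonneg (hκ x hx).1, Real.norm_eq_abs]
      exact (mul_le_of_le_one_right (hκ x hx).1 (abs_sin_le_one _)).trans (hκ x hx).2
    have hlip := (convex_Icc c d).norm_image_sub_le_of_norm_hasDerivWithin_le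
      (fun x hx => (hdot (γ' s) hγ'' x hx).hasDerivWithinAt) hbound hs hr
    have hval : ∀ r ∈ Icc c d, dotL (γ' s) (γ' r) = cos (φ r - φ s) := by
      intro r hr
      simp only [htang s hs, htang r hr, dotL_apply, cos_sub]
      ring
    rw [hval r hr, hval s hs, sub_self, cos_zero, Real.norm_eq_abs, Real.norm_eq_abs] at hlip
    have hrs : |r - s| ≤ d - c := abs_sub_le_of_le_of_le hr.1 hr.2 hs.1 hs.2
    have hMrs : M * |r - s| ≤ 1 := by
      nlinarith [abs_nonneg (r - s), (hκ s hs).1.trans (hκ s hs).2]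
    linarith [abs_le.1 (hlip.trans hMrs)]
  have hmono : MonotoneOn (fun r => dotL N (γ' r)) (Icc c d) := by
    refine monotoneOn_of_hasDerivWithinAt_nonneg (convex_Icc c d)
      (fun r hr => (hdot N hγ'' r hr).continuousAt.continuousWithinAt)
      (fun r hr => (hdot N hγ'' r (interior_subset hr)).hasDerivWithinAt) fun r hr => ?_
    have hr := interior_subset hr
    have hval : dotL N (γ'' r) = κ r * cos (φ r - φ s) := by
      simp only [N, hframe r hr, dotL_apply, Prod.smul_fst, Prod.smul_snd, smul_eq_mul, cos_sub]
      ring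
    exact hval ▸ mul_nonneg (hκ r hr).1 (hcos r hr)
  have hmin := isMinOn_of_hasDerivAt_of_monotoneOn (hdot N hγ') hmono hs
    (by simp only [N, htang s hs, dotL_apply]; ring)
  exact isMinOn_iff.2 (forall_mem_image.2 (isMinOn_iff.1 hmin))

theorem locally_convex_of_positive_curvature_general
    (a b : ℝ) (γ γ' γ'' : ℝ → ℝ × ℝ) (φ : ℝ → ℝ)
    (hγ' : ∀ s ∈ Set.Icc a b, HasDerivAt γ (γ' s) s)
    (hγ'' : ∀ s ∈ Set.Icc a b, HasDerivAt γ' (γ'' s) s)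
    (htang : ∀ s ∈ Set.Icc a b, γ' s = (Real.sin (φ s), -Real.cos (φ s)))
    (hκcont : ContinuousOn
      (fun s => Real.cos (φ s) * (γ'' s).1 + Real.sin (φ s) * (γ'' s).2) (Set.Icc a b))
    (s₀ : ℝ) (hs₀ : s₀ ∈ Set.Ioo a b)
    (hκpos : 0 < Real.cos (φ s₀) * (γ'' s₀).1 + Real.sin (φ s₀) * (γ'' s₀).2) :
    ∃ δ > (0:ℝ), Set.Icc (s₀ - δ) (s₀ + δ) ⊆ Set.Icc a b ∧
      IsConvexCurveGraph (γ '' Set.Icc (s₀ - δ) (s₀ + δ)) ∧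
      ∀ s ∈ Set.Icc (s₀ - δ) (s₀ + δ),
        0 < Real.cos (φ s) * (γ'' s).1 + Real.sin (φ s) * (γ'' s).2 := by
  obtain ⟨δ, hδ, hsub, hδM, hκ⟩ := exists_Icc_subset_forall_mem_Ioo (Ioo_mem_nhds hs₀.1 hs₀.2)
    (hκcont.continuousAt (Icc_mem_nhds hs₀.1 hs₀.2)) hκpos (lt_add_one _)
  have hsub' : Icc (s₀ - δ) (s₀ + δ) ⊆ Icc a b := hsub.trans Ioo_subset_Icc_self
  have hs₀δ : s₀ ∈ Icc (s₀ - δ) (s₀ + δ) := ⟨by linarith, by linarith⟩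
  have hframe : ∀ r ∈ Icc (s₀ - δ) (s₀ + δ), γ'' r =
      (cos (φ r) * (γ'' r).1 + sin (φ r) * (γ'' r).2) • (cos (φ r), sin (φ r)) := fun r hr =>
    eq_curvature_smul_normal (hγ'' r (hsub' hr))
      (eventually_of_mem (Icc_mem_nhds (hsub hr).1 (hsub hr).2) htang)
  refine ⟨δ, hδ, hsub', ?_, fun s hs => (hκ s hs).1⟩
  refine isConvexCurveGraph_of_forall_isMinOn ⟨γ s₀, mem_image_of_mem γ hs₀δ⟩
    (isCompact_Icc.image_of_continuousOn fun r hr =>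
      (hγ' r (hsub' hr)).continuousAt.continuousWithinAt) ?_
  rintro _ ⟨s, hs, rfl⟩
  refine ⟨dotL (cos (φ s), sin (φ s)), fun h => ?_, isMinOn_normal_of_curvature_le
    (fun r hr => hγ' r (hsub' hr)) (fun r hr => hγ'' r (hsub' hr))
    (fun r hr => htang r (hsub' hr)) hframe (fun r hr => ⟨(hκ r hr).1.le, (hκ r hr).2.le⟩)
    (by linarith) hs⟩
  simpa [sin_sq_add_cos_sq, ← sq] using congrArg (· (cos (φ s), sin (φ s))) h

/-- Let `γ` be a C² arc-length curve with continuous curvature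
`κ(s) = ⟨N(s), γ''(s)⟩`, and let `s₀ ∈ (a,b)` with `κ(s₀) > 0`.  Then there is `δ > 0`
such that `[s₀−δ, s₀+δ] ⊆ [a,b]` and the restriction of `γ` to `[s₀−δ, s₀+δ]` is a
convex curve with strictly positive curvature: its graph is contained in the boundary of
a nonempty compact convex subset of `ℝ²` and `κ(s) > 0` on `[s₀−δ, s₀+δ]`. -/
theorem locally_convex_of_positive_curvature
    (a b : ℝ) (γ γ' γ'' : ℝ → ℝ × ℝ) (φ : ℝ → ℝ)
    (hab : a < b)
    (hγ' : ∀ s ∈ Set.Icc a b, HasDerivAt γ (γ' s) s)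
    (hγ'' : ∀ s ∈ Set.Icc a b, HasDerivAt γ' (γ'' s) s)
    (hC2 : ContinuousOn γ'' (Set.Icc a b))
    (htang : ∀ s ∈ Set.Icc a b, γ' s = (Real.sin (φ s), -Real.cos (φ s)))
    (hκcont : ContinuousOn
      (fun s => Real.cos (φ s) * (γ'' s).1 + Real.sin (φ s) * (γ'' s).2) (Set.Icc a b))
    (s₀ : ℝ) (hs₀ : s₀ ∈ Set.Ioo a b)
    (hκpos : 0 < Real.cos (φ s₀) * (γ'' s₀).1 + Real.sin (φ s₀) * (γ'' s₀).2) :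
    ∃ δ > (0:ℝ), Set.Icc (s₀ - δ) (s₀ + δ) ⊆ Set.Icc a b ∧
      IsConvexCurveGraph (γ '' Set.Icc (s₀ - δ) (s₀ + δ)) ∧
      ∀ s ∈ Set.Icc (s₀ - δ) (s₀ + δ),
        0 < Real.cos (φ s) * (γ'' s).1 + Real.sin (φ s) * (γ'' s).2 :=
  locally_convex_of_positive_curvature_general a b γ γ' γ'' φ hγ' hγ'' htang hκcont s₀ hs₀ hκpos
end
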